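/- Let γ > 0, let g: ℝ₊ → ℝ be differentiable strictly convex with lim_{m→∞} g'(m) = +∞, and consider ψ(α,β,δ) = φ(α + |P_K β|²/2 + δ) on ℝ × ℝ^4 × ℝ with φ = F* as above. Then for any (α₀,β₀,δ₀), prox_{ψ/γ}(α₀,β₀,δ₀) = (α₀,β₀,δ₀) if α₀ + |P_K β₀|²/2 + δ₀ ≤ g'(0); otherwise it equals (α₀ − s, P_K β₀/(1+s) + P_{K⁻} β₀, δ₀ − s), where s ≥ 0 is the unique nonnegative solution of γs = (g*)'(α₀ + δ₀ − 2s + |P_K β₀|²/(2(1+s)²)). -/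

import Mathlib

/-!
Write `ψ = φ ∘ h` with `h(α, β, δ) = α + |P_K β|²/2 + δ`. If `h(x₀) ≤ g'(0)` then `φ'(h x₀) = 0`,
so `x₀` minimizes `φ ∘ h` and is its own prox. Otherwise the prox `p` satisfies
`x₀ - p = s ∇h(p)` with `s = φ'(h p)/γ`, i.e. `p` is the prox of the quadratic `s h` at `x₀`,
which is explicit (coordinatewise on `K`): `p = (α₀ - s, P_K β₀/(1+s) + P_{K⁻} β₀, δ₀ - s)`.
Conversely, for such `s`, the gradient inequality of `φ` at `h p` added to the minimality of `p`
for `s h + |· - x₀|²/2` shows that `p` minimizes `ψ/γ + |· - x₀|²/2`. The scalar equation for `s`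
has a solution by Darboux's theorem applied to the prox objective along the curve `s ↦ p(s)`, and
at most one, since `γ s` increases and `φ'(h(p(s)))` decreases in `s`.
-/

open scoped BigOperators
open Classical

noncomputable section

/-- Euclidean norm on ℝ⁴. -/
def nrm4 (w : Fin 4 → ℝ) : ℝ := Real.sqrt (∑ i, (w i) ^ 2)

/-- Euclidean projection onto `K = ℝ₊ × ℝ₋ × ℝ₊ × ℝ₋`. -/
def PK (w : Fin 4 → ℝ) : Fin 4 → ℝ := ![max (w 0) 0, min (w 1) 0, max (w 2) 0, min (w 3) 0]

/-- Squared Euclidean distance on `ℝ × ℝ⁴ × ℝ`. -/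
def dsq3 (x y : ℝ × (Fin 4 → ℝ) × ℝ) : ℝ :=
  (x.1 - y.1) ^ 2 + (∑ i, (x.2.1 i - y.2.1 i) ^ 2) + (x.2.2 - y.2.2) ^ 2

open Set

theorem ConvexOn.add_mul_sub_le_of_hasDerivAt {f : ℝ → ℝ} {f' x : ℝ}
    (hf : ConvexOn ℝ univ f) (hx : HasDerivAt f f' x) (y : ℝ) :
    f x + f' * (y - x) ≤ f y := by
  rcases lt_trichotomy x y with hxy | rfl | hyx
  · have h := hf.le_slope_of_hasDerivAt (mem_univ x) (mem_univ y) hxy hx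
    rw [slope_def_field, le_div_iff₀ (sub_pos.mpr hxy)] at h
    linarith
  · simp
  · have h := hf.slope_le_of_hasDerivAt (mem_univ y) (mem_univ x) hyx hx
    rw [slope_def_field, div_le_iff₀ (sub_pos.mpr hyx)] at h
    nlinarith

theorem ConvexOn.monotone_of_hasDerivAt {f f' : ℝ → ℝ} (hf : ConvexOn ℝ univ f)
    (hd : ∀ x, HasDerivAt f (f' x) x) : Monotone f' := by
  have hderiv : deriv f = f' := funext fun x => (hd x).deriv
  exact hderiv ▸ monotoneOn_univ.mp (hf.monotoneOn_deriv fun x _ => (hd x).differentiableAt)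

theorem nrm4_sq (w : Fin 4 → ℝ) : nrm4 w ^ 2 = ∑ i, w i ^ 2 :=
  Real.sq_sqrt (by positivity)

theorem max_div_one_add_add_sub_max {s : ℝ} (hs : 0 ≤ s) (b : ℝ) :
    max (max b 0 / (1 + s) + (b - max b 0)) 0 = max b 0 / (1 + s) := by
  rcases le_total b 0 with hb | hb
  · simp [hb]
  · rw [max_eq_left hb, sub_self, add_zero]
    exact max_eq_left (by positivity)

theorem min_div_one_add_add_sub_min {s : ℝ} (hs : 0 ≤ s) (b : ℝ) :
    min (min b 0 / (1 + s) + (b - min b 0)) 0 = min b 0 / (1 + s) := by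
  have h := max_div_one_add_add_sub_max hs (-b)
  rw [← neg_zero, max_neg_neg,
    show -min b 0 / (1 + s) + (-b - -min b 0) = -(min b 0 / (1 + s) + (b - min b 0)) by ring,
    max_neg_neg, neg_div, neg_inj] at h
  exact h

/-- The left side is the minimum of `y ↦ s * max y 0 ^ 2 + (y - b) ^ 2`, attained at `b / (1 + s)`
if `b ≥ 0` and at `b` if `b ≤ 0`. -/
theorem max_sq_prox_le {s : ℝ} (hs : 0 ≤ s) (b y : ℝ) :
    s * (max b 0 / (1 + s)) ^ 2 + (max b 0 / (1 + s) - max b 0) ^ 2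
      ≤ s * max y 0 ^ 2 + (y - b) ^ 2 := by
  rcases le_total b 0 with hb | hb
  · have : 0 ≤ s * max y 0 ^ 2 + (y - b) ^ 2 := by positivity
    simpa [max_eq_right hb] using this
  have hs1 : 0 < 1 + s := by linarith
  have hlhs : s * (b / (1 + s)) ^ 2 + (b / (1 + s) - b) ^ 2 = s * b ^ 2 / (1 + s) := by
    field_simp
    ring
  rw [max_eq_left hb, hlhs, div_le_iff₀ hs1]
  rcases le_total y 0 with hy | hy
  · rw [max_eq_right hy]
    have hyb : b ^ 2 ≤ (y - b) ^ 2 := by nlinarith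
    nlinarith [mul_le_mul_of_nonneg_left hyb hs]
  · rw [max_eq_left hy]
    nlinarith [sq_nonneg ((1 + s) * y - b)]

theorem min_sq_prox_le {s : ℝ} (hs : 0 ≤ s) (b y : ℝ) :
    s * (min b 0 / (1 + s)) ^ 2 + (min b 0 / (1 + s) - min b 0) ^ 2
      ≤ s * min y 0 ^ 2 + (y - b) ^ 2 := by
  have h := max_sq_prox_le hs (-b) (-y)
  rw [← neg_zero, max_neg_neg, max_neg_neg] at h
  convert h using 2 <;> ring

def psiArg (x : ℝ × (Fin 4 → ℝ) × ℝ) : ℝ := x.1 + nrm4 (PK x.2.1) ^ 2 / 2 + x.2.2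

/-- `P_K β / (1 + s) + P_{K⁻} β`, by Moreau's decomposition `β = P_K β + P_{K⁻} β`. -/
def proxK (β : Fin 4 → ℝ) (s : ℝ) : Fin 4 → ℝ := fun i => PK β i / (1 + s) + (β i - PK β i)

def proxPoint (x : ℝ × (Fin 4 → ℝ) × ℝ) (s : ℝ) : ℝ × (Fin 4 → ℝ) × ℝ :=
  (x.1 - s, proxK x.2.1 s, x.2.2 - s)

def psiArgCurve (A N s : ℝ) : ℝ := A - 2 * s + N / (2 * (1 + s) ^ 2)

theorem PK_proxK {s : ℝ} (hs : 0 ≤ s) (β : Fin 4 → ℝ) :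
    PK (proxK β s) = fun i => PK β i / (1 + s) := by
  funext i
  fin_cases i <;> simp [PK, proxK, max_div_one_add_add_sub_max hs, min_div_one_add_add_sub_min hs]

theorem proxK_isMin {s : ℝ} (hs : 0 ≤ s) (β y : Fin 4 → ℝ) :
    s * nrm4 (PK (proxK β s)) ^ 2 + ∑ i, (proxK β s i - β i) ^ 2
      ≤ s * nrm4 (PK y) ^ 2 + ∑ i, (y i - β i) ^ 2 := by
  have hsub (a b : ℝ) : a / (1 + s) + (b - a) - b = a / (1 + s) - a := by ring
  rw [PK_proxK hs]
  simp only [nrm4_sq, Fin.sum_univ_four, proxK, hsub, PK, Matrix.cons_val_zero,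
    Matrix.cons_val_one, Matrix.cons_val_two, Matrix.cons_val_three, Matrix.head_cons,
    Matrix.tail_cons]
  linarith [max_sq_prox_le hs (β 0) (y 0), min_sq_prox_le hs (β 1) (y 1),
    max_sq_prox_le hs (β 2) (y 2), min_sq_prox_le hs (β 3) (y 3)]

theorem psiArg_proxPoint {s : ℝ} (hs : 0 ≤ s) (x : ℝ × (Fin 4 → ℝ) × ℝ) :
    psiArg (proxPoint x s) = psiArgCurve (x.1 + x.2.2) (nrm4 (PK x.2.1) ^ 2) s := by
  have hs1 : 0 < 1 + s := by linarith
  simp only [psiArg, proxPoint, psiArgCurve, PK_proxK hs, nrm4_sq, div_pow, ← Finset.sum_div]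
  field_simp
  ring

theorem proxPoint_isMin {s : ℝ} (hs : 0 ≤ s) (x z : ℝ × (Fin 4 → ℝ) × ℝ) :
    s * psiArg (proxPoint x s) + dsq3 (proxPoint x s) x / 2 ≤ s * psiArg z + dsq3 z x / 2 := by
  have hK := proxK_isMin hs x.2.1 z.2.1
  simp only [psiArg, proxPoint, dsq3]
  nlinarith [sq_nonneg (z.1 - x.1 + s), sq_nonneg (z.2.2 - x.2.2 + s)]

theorem proxPoint_le {φ φ' : ℝ → ℝ} {γ s : ℝ} (hγ : 0 < γ) (hder : ∀ η, HasDerivAt φ (φ' η) η)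
    (hconv : ConvexOn ℝ univ φ) (hs : 0 ≤ s) {x : ℝ × (Fin 4 → ℝ) × ℝ}
    (hs_eq : γ * s = φ' (psiArgCurve (x.1 + x.2.2) (nrm4 (PK x.2.1) ^ 2) s))
    (z : ℝ × (Fin 4 → ℝ) × ℝ) :
    φ (psiArg (proxPoint x s)) / γ + dsq3 (proxPoint x s) x / 2
      ≤ φ (psiArg z) / γ + dsq3 z x / 2 := by
  rw [← psiArg_proxPoint hs] at hs_eq
  have hgrad :=
    hconv.add_mul_sub_le_of_hasDerivAt (hs_eq ▸ hder (psiArg (proxPoint x s))) (psiArg z)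
  have hdiv := div_le_div_of_nonneg_right hgrad hγ.le
  rw [add_div, mul_assoc, mul_div_cancel_left₀ _ hγ.ne'] at hdiv
  linarith [proxPoint_isMin hs x z]

theorem hasDerivAt_two_mul_one_add_sq (t : ℝ) :
    HasDerivAt (fun u : ℝ => 2 * (1 + u) ^ 2) (4 * (1 + t)) t :=
  ((((hasDerivAt_id' t).const_add 1).pow 2).const_mul 2).congr_deriv (by ring)

theorem hasDerivAt_psiArgCurve (A N : ℝ) {t : ℝ} (ht : -1 < t) :
    HasDerivAt (psiArgCurve A N) (-2 - N / (1 + t) ^ 3) t := by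
  have hne : 2 * (1 + t) ^ 2 ≠ 0 := by nlinarith
  exact ((((hasDerivAt_id' t).const_mul 2).const_sub A).add
    ((hasDerivAt_const t N).div (hasDerivAt_two_mul_one_add_sq t) hne)).congr_deriv
    (by field_simp; ring)

/-- With `A = x.1 + x.2.2` and `N = nrm4 (PK x.2.1) ^ 2`, the function differentiated here is
`γ` times the prox objective at `proxPoint x u` (see `psiArg_proxPoint`). -/
theorem hasDerivAt_proxObjCurve {φ φ' : ℝ → ℝ} (hder : ∀ η, HasDerivAt φ (φ' η) η) (γ A N : ℝ)
    {t : ℝ} (ht : -1 < t) :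
    HasDerivAt (fun u => φ (psiArgCurve A N u) + γ * (u ^ 2 + N * u ^ 2 / (2 * (1 + u) ^ 2)))
      ((2 + N / (1 + t) ^ 3) * (γ * t - φ' (psiArgCurve A N t))) t := by
  have hne : 2 * (1 + t) ^ 2 ≠ 0 := by nlinarith
  have hq : HasDerivAt (fun u : ℝ => u ^ 2 + N * u ^ 2 / (2 * (1 + u) ^ 2))
      (t * (2 + N / (1 + t) ^ 3)) t :=
    ((hasDerivAt_pow 2 t).add (((hasDerivAt_pow 2 t).const_mul N).div
      (hasDerivAt_two_mul_one_add_sq t) hne)).congr_deriv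
      (by field_simp; ring)
  exact (((hder _).comp t (hasDerivAt_psiArgCurve A N ht)).add (hq.const_mul γ)).congr_deriv
    (by ring)

theorem psiArgCurve_antitoneOn (A : ℝ) {N : ℝ} (hN : 0 ≤ N) :
    AntitoneOn (psiArgCurve A N) (Ici 0) := by
  intro a ha b hb hab
  have ha' : (0 : ℝ) ≤ a := ha
  unfold psiArgCurve
  have : N / (2 * (1 + b) ^ 2) ≤ N / (2 * (1 + a) ^ 2) := by gcongr
  linarith

theorem strictMonoOn_mul_sub_comp_psiArgCurve {φ' : ℝ → ℝ} (hφ' : Monotone φ') {γ : ℝ}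
    (hγ : 0 < γ) (A : ℝ) {N : ℝ} (hN : 0 ≤ N) :
    StrictMonoOn (fun s => γ * s - φ' (psiArgCurve A N s)) (Ici 0) := by
  intro a ha b hb hab
  have hφ'ab := hφ' (psiArgCurve_antitoneOn A hN ha hb hab.le)
  have hγab := mul_lt_mul_of_pos_left hab hγ
  dsimp only
  linarith

theorem exists_mul_eq_comp_psiArgCurve {φ φ' : ℝ → ℝ} (hder : ∀ η, HasDerivAt φ (φ' η) η)
    (hφ' : Monotone φ') {γ : ℝ} (hγ : 0 < γ) (A : ℝ) {N : ℝ} (hN : 0 ≤ N)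
    (hpos : 0 < φ' (A + N / 2)) :
    ∃ s, 0 ≤ s ∧ γ * s = φ' (psiArgCurve A N s) := by
  set F' := fun t => (2 + N / (1 + t) ^ 3) * (γ * t - φ' (psiArgCurve A N t))
  -- at `R`, `γ R` exceeds `φ' (A + N / 2)`, which bounds `φ'` along the curve
  set R := φ' (A + N / 2) / γ + 1
  have hR : 0 < R := by positivity
  have h0 : psiArgCurve A N 0 = A + N / 2 := by simp [psiArgCurve]
  have hF'0 : F' 0 < 0 := by
    simp only [F', h0]
    nlinarith
  have hF'R : 0 < F' R := by
    have hle := hφ' (psiArgCurve_antitoneOn A hN (mem_Ici.mpr le_rfl) hR.le hR.le)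
    rw [h0] at hle
    have hγR : γ * R = φ' (A + N / 2) + γ := by simp only [R]; field_simp
    have hfac : 0 < 2 + N / (1 + R) ^ 3 := by positivity
    simp only [F']
    nlinarith
  obtain ⟨s, ⟨hs, -⟩, hF's⟩ := exists_hasDerivWithinAt_eq_of_gt_of_lt hR.le
    (fun t ht => (hasDerivAt_proxObjCurve hder γ A N (by linarith [ht.1])).hasDerivWithinAt)
    hF'0 hF'R
  have hfac : 0 < 2 + N / (1 + s) ^ 3 := by positivity
  refine ⟨s, hs.le, ?_⟩
  linarith [(mul_eq_zero.mp hF's).resolve_left hfac.ne']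

theorem stmt10_general (γ : ℝ) (hγ : 0 < γ) (φ φ' : ℝ → ℝ) (c : ℝ)
    (hder : ∀ η, HasDerivAt φ (φ' η) η)
    (hconv : ConvexOn ℝ Set.univ φ)
    (hzero : ∀ η ≤ c, φ' η = 0)
    (hpos : ∀ η, c < η → 0 < φ' η)
    (α₀ δ₀ : ℝ) (β₀ : Fin 4 → ℝ) :
    -- if the argument is ≤ g'(0), the point is its own prox
    (α₀ + nrm4 (PK β₀) ^ 2 / 2 + δ₀ ≤ c →
      ∀ z : ℝ × (Fin 4 → ℝ) × ℝ,
        φ (α₀ + nrm4 (PK β₀) ^ 2 / 2 + δ₀) / γ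
          ≤ φ (z.1 + nrm4 (PK z.2.1) ^ 2 / 2 + z.2.2) / γ + dsq3 z (α₀, β₀, δ₀) / 2)
    ∧ -- otherwise there is a unique s ≥ 0 solving the scalar equation, and the prox
      -- is (α₀ − s, P_K β₀/(1+s) + P_{K⁻} β₀, δ₀ − s)
    (c < α₀ + nrm4 (PK β₀) ^ 2 / 2 + δ₀ →
      (∃! s : ℝ, 0 ≤ s ∧
        γ * s = φ' (α₀ + δ₀ - 2 * s + nrm4 (PK β₀) ^ 2 / (2 * (1 + s) ^ 2)))
      ∧ ∀ s : ℝ, 0 ≤ s →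
          γ * s = φ' (α₀ + δ₀ - 2 * s + nrm4 (PK β₀) ^ 2 / (2 * (1 + s) ^ 2)) →
          ∀ z : ℝ × (Fin 4 → ℝ) × ℝ,
            (let pt : ℝ × (Fin 4 → ℝ) × ℝ :=
              (α₀ - s, fun i => PK β₀ i / (1 + s) + (β₀ i - PK β₀ i), δ₀ - s)
            φ (pt.1 + nrm4 (PK pt.2.1) ^ 2 / 2 + pt.2.2) / γ + dsq3 pt (α₀, β₀, δ₀) / 2
              ≤ φ (z.1 + nrm4 (PK z.2.1) ^ 2 / 2 + z.2.2) / γ + dsq3 z (α₀, β₀, δ₀) / 2)) := by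
  have hφ' : Monotone φ' := hconv.monotone_of_hasDerivAt hder
  have hN : 0 ≤ nrm4 (PK β₀) ^ 2 := sq_nonneg _
  refine ⟨fun hle z => ?_, fun hgt => ⟨?_, fun s hs hs_eq z =>
    proxPoint_le (x := (α₀, β₀, δ₀)) hγ hder hconv hs hs_eq z⟩⟩
  · have hmin := hconv.add_mul_sub_le_of_hasDerivAt (hder (psiArg (α₀, β₀, δ₀))) (psiArg z)
    rw [hzero (psiArg (α₀, β₀, δ₀)) hle, zero_mul, add_zero] at hmin
    have hdist : 0 ≤ dsq3 z (α₀, β₀, δ₀) := by unfold dsq3; positivity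
    exact le_add_of_le_of_nonneg (div_le_div_of_nonneg_right hmin hγ.le) (by positivity)
  · obtain ⟨s, hs, hs_eq⟩ :=
      exists_mul_eq_comp_psiArgCurve hder hφ' hγ (α₀ + δ₀) hN (hpos _ (by linarith))
    refine ⟨s, ⟨hs, hs_eq⟩, fun t ⟨ht, ht_eq⟩ =>
      (strictMonoOn_mul_sub_comp_psiArgCurve hφ' hγ (α₀ + δ₀) hN).injOn ht hs ?_⟩
    simp only [psiArgCurve] at hs_eq ⊢
    linarith

/-- computation of `prox_{ψ/γ}` for
`ψ(α,β,δ) = φ(α + |P_K β|²/2 + δ)`, where `φ = F*` is convex, nondecreasing,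
differentiable, with `φ' = 0` on `(−∞, g'(0)]` and `φ' = (g*)' > 0`, strictly
increasing, beyond `g'(0)` (here `c` stands for `g'(0)`). -/
theorem stmt10 (γ : ℝ) (hγ : 0 < γ) (φ φ' : ℝ → ℝ) (c : ℝ)
    (hder : ∀ η, HasDerivAt φ (φ' η) η)
    (hconv : ConvexOn ℝ Set.univ φ)
    (hmono : Monotone φ)
    (hzero : ∀ η ≤ c, φ' η = 0)
    (hpos : ∀ η, c < η → 0 < φ' η)
    (hsm : StrictMonoOn φ' (Set.Ici c))
    (α₀ δ₀ : ℝ) (β₀ : Fin 4 → ℝ) :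
    -- if the argument is ≤ g'(0), the point is its own prox
    (α₀ + nrm4 (PK β₀) ^ 2 / 2 + δ₀ ≤ c →
      ∀ z : ℝ × (Fin 4 → ℝ) × ℝ,
        φ (α₀ + nrm4 (PK β₀) ^ 2 / 2 + δ₀) / γ
          ≤ φ (z.1 + nrm4 (PK z.2.1) ^ 2 / 2 + z.2.2) / γ + dsq3 z (α₀, β₀, δ₀) / 2)
    ∧ -- otherwise there is a unique s ≥ 0 solving the scalar equation, and the prox
      -- is (α₀ − s, P_K β₀/(1+s) + P_{K⁻} β₀, δ₀ − s)
    (c < α₀ + nrm4 (PK β₀) ^ 2 / 2 + δ₀ →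
      (∃! s : ℝ, 0 ≤ s ∧
        γ * s = φ' (α₀ + δ₀ - 2 * s + nrm4 (PK β₀) ^ 2 / (2 * (1 + s) ^ 2)))
      ∧ ∀ s : ℝ, 0 ≤ s →
          γ * s = φ' (α₀ + δ₀ - 2 * s + nrm4 (PK β₀) ^ 2 / (2 * (1 + s) ^ 2)) →
          ∀ z : ℝ × (Fin 4 → ℝ) × ℝ,
            (let pt : ℝ × (Fin 4 → ℝ) × ℝ :=
              (α₀ - s, fun i => PK β₀ i / (1 + s) + (β₀ i - PK β₀ i), δ₀ - s)
            φ (pt.1 + nrm4 (PK pt.2.1) ^ 2 / 2 + pt.2.2) / γ + dsq3 pt (α₀, β₀, δ₀) / 2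
              ≤ φ (z.1 + nrm4 (PK z.2.1) ^ 2 / 2 + z.2.2) / γ + dsq3 z (α₀, β₀, δ₀) / 2)) :=
  stmt10_general γ hγ φ φ' c hder hconv hzero hpos α₀ δ₀ β₀
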